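/- arXiv:1402.4722 — 5 statements merged into one kernel-verified Lean document; each statement's English description precedes it below -/
import Mathlib

section
/- Let p1, p2 be points in the plane with ‖p1 − p2‖ ≤ 2, and let q be a point with ‖q − p1‖ > √2 and ‖q − p2‖ > √2. Then the closed unit disk centered at q does not intersect the line segment from p1 to p2; i.e., every point on the segment p1p2 is at distance greater than 1 from q. -/
/-!
For `x = a • p₁ + b • p₂` on the segment (`a + b = 1`, `a, b ≥ 0`), the identity
`‖q - x‖² = a ‖q - p₁‖² + b ‖q - p₂‖² - a b ‖p₁ - p₂‖²` (Stewart's theorem) together with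
`a b ≤ 1/4` gives `‖q - x‖² > 2 - 1 = 1` as soon as both endpoints are farther than `√2`
from `q` and `‖p₁ - p₂‖ ≤ 2`.
-/

section InnerProductSpace

variable {F : Type*} [NormedAddCommGroup F] [InnerProductSpace ℝ F]

theorem norm_smul_add_smul_sq_of_add_eq_one {a b : ℝ} (hab : a + b = 1) (u v : F) :
    ‖a • u + b • v‖ ^ 2 = a * ‖u‖ ^ 2 + b * ‖v‖ ^ 2 - a * b * ‖u - v‖ ^ 2 := by
  obtain rfl : b = 1 - a := by linarith
  rw [norm_add_sq_real, norm_sub_sq_real, norm_smul, norm_smul, real_inner_smul_left,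
    real_inner_smul_right, mul_pow, mul_pow, Real.norm_eq_abs, Real.norm_eq_abs, sq_abs,
    sq_abs]
  ring

theorem dist_sq_of_mem_segment {p₁ p₂ x : F} (q : F) (hx : x ∈ segment ℝ p₁ p₂) :
    ∃ a b : ℝ, 0 ≤ a ∧ 0 ≤ b ∧ a + b = 1 ∧
      dist q x ^ 2 = a * dist q p₁ ^ 2 + b * dist q p₂ ^ 2 - a * b * dist p₁ p₂ ^ 2 := by
  obtain ⟨a, b, ha, hb, hab, rfl⟩ := hx
  refine ⟨a, b, ha, hb, hab, ?_⟩
  have hq : q - (a • p₁ + b • p₂) = a • (q - p₁) + b • (q - p₂) := by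
    rw [smul_sub, smul_sub, sub_add_sub_comm, ← add_smul, hab, one_smul]
  simp only [dist_eq_norm, hq, norm_smul_add_smul_sq_of_add_eq_one hab, sub_sub_sub_cancel_left,
    norm_sub_rev p₂ p₁]

theorem lt_dist_of_mem_segment {p₁ p₂ q x : F} {r d : ℝ} (h₁₂ : dist p₁ p₂ ≤ 2 * d)
    (h₁ : r ^ 2 + d ^ 2 < dist q p₁ ^ 2) (h₂ : r ^ 2 + d ^ 2 < dist q p₂ ^ 2)
    (hx : x ∈ segment ℝ p₁ p₂) : r < dist q x := by
  obtain ⟨a, b, ha, hb, hab, hdist⟩ := dist_sq_of_mem_segment q hx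
  have hendpoints : r ^ 2 + d ^ 2 < a * dist q p₁ ^ 2 + b * dist q p₂ ^ 2 := by
    rcases ha.eq_or_lt with rfl | ha'
    · simpa [show b = 1 by linarith] using h₂
    · nlinarith
  have hbase : dist p₁ p₂ ^ 2 ≤ 4 * d ^ 2 := by nlinarith [dist_nonneg (x := p₁) (y := p₂)]
  have hab4 : 4 * (a * b) ≤ 1 := by nlinarith [sq_nonneg (a - b)]
  have hsq : r ^ 2 < dist q x ^ 2 := by
    nlinarith [mul_le_mul_of_nonneg_left hbase (mul_nonneg ha hb), sq_nonneg d]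
  exact (le_abs_self r).trans_lt (abs_lt_of_sq_lt_sq hsq dist_nonneg)

end InnerProductSpace

theorem stmt_0 (p1 p2 q : EuclideanSpace ℝ (Fin 2))
    (h12 : dist p1 p2 ≤ 2)
    (hq1 : Real.sqrt 2 < dist q p1) (hq2 : Real.sqrt 2 < dist q p2) :
    ∀ x ∈ segment ℝ p1 p2, 1 < dist q x := by
  have hsq : ∀ p, Real.sqrt 2 < dist q p → (1 : ℝ) ^ 2 + 1 ^ 2 < dist q p ^ 2 := fun p hp => by
    norm_num [← Real.sqrt_lt' ((Real.sqrt_nonneg 2).trans_lt hp), hp]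
  intro x hx
  exact lt_dist_of_mem_segment (by simpa using h12) (hsq p1 hq1) (hsq p2 hq2) hx
end

section
/- Let S be a finite set of points in the plane such that the distance between any two distinct points of S is greater than √2. Then the graph on S where two points are adjacent iff their distance is at most 2, drawn with straight-line segments between adjacent points, is a planar drawing: no two edges (segments joining adjacent pairs with disjoint endpoint sets) intersect except possibly at shared endpoints. -/
/-!
If the two segments met at a point `x`, then applying the identity
`a‖p₁ - y‖² + b‖p₂ - y‖² = ‖x - y‖² + ab‖p₁ - p₂‖²` (for `x = a p₁ + b p₂`, `a + b = 1`)
first on `q₁q₂` with `y = x` and then on `p₁p₂` with `y` the endpoint found, and using `ab ≤ 1/4`,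
yields endpoints `p`, `q` of the two segments with
`dist p q ^ 2 ≤ (dist p₁ p₂ ^ 2 + dist q₁ q₂ ^ 2) / 4 ≤ 2`.
The endpoint sets are disjoint, so `p ≠ q`, and then `dist p q ^ 2 > 2`.
-/

section Segment

variable {E : Type*} [NormedAddCommGroup E] [InnerProductSpace ℝ E]

theorem mul_dist_sq_add_mul_dist_sq_eq (p₁ p₂ y : E) {a b : ℝ} (hab : a + b = 1) :
    a * dist p₁ y ^ 2 + b * dist p₂ y ^ 2 =
      dist (a • p₁ + b • p₂) y ^ 2 + a * b * dist p₁ p₂ ^ 2 := by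
  obtain rfl : a = 1 - b := by linarith
  have hx : (1 - b) • p₁ + b • p₂ - y = (p₁ - y) + b • (p₂ - p₁) := by module
  have h₂ : p₂ - y = (p₁ - y) + (p₂ - p₁) := by abel
  rw [dist_eq_norm, dist_eq_norm, dist_eq_norm, dist_eq_norm', hx, h₂]
  simp only [← real_inner_self_eq_norm_sq, inner_add_left, inner_add_right,
    real_inner_smul_left, real_inner_smul_right, real_inner_comm (p₁ - y)]
  ring

theorem exists_dist_sq_le_of_mem_segment {x p₁ p₂ : E} (hx : x ∈ segment ℝ p₁ p₂) (y : E) :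
    ∃ p ∈ ({p₁, p₂} : Set E), dist p y ^ 2 ≤ dist x y ^ 2 + dist p₁ p₂ ^ 2 / 4 := by
  obtain ⟨a, b, ha, hb, hab, rfl⟩ := hx
  have hweighted := mul_dist_sq_add_mul_dist_sq_eq p₁ p₂ y hab
  have hab_le : a * b ≤ 1 / 4 := by nlinarith [sq_nonneg (a - b)]
  have hW := sq_nonneg (dist p₁ p₂)
  rcases le_total (dist p₁ y ^ 2) (dist p₂ y ^ 2) with h | h
  · exact ⟨p₁, by simp, by nlinarith⟩
  · exact ⟨p₂, by simp, by nlinarith⟩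

theorem exists_dist_sq_le_of_mem_segment_inter {x p₁ p₂ q₁ q₂ : E}
    (hx : x ∈ segment ℝ p₁ p₂ ∩ segment ℝ q₁ q₂) :
    ∃ p ∈ ({p₁, p₂} : Set E), ∃ q ∈ ({q₁, q₂} : Set E),
      dist p q ^ 2 ≤ (dist p₁ p₂ ^ 2 + dist q₁ q₂ ^ 2) / 4 := by
  obtain ⟨q, hq, hqx⟩ := exists_dist_sq_le_of_mem_segment hx.2 x
  obtain ⟨p, hp, hpq⟩ := exists_dist_sq_le_of_mem_segment hx.1 q
  rw [dist_self, dist_comm] at hqx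
  exact ⟨p, hp, q, hq, by linarith⟩

end Segment

/-- In a set of planar points with pairwise distances greater than `√2`,
drawing straight segments between points at distance at most `2` gives a
planar drawing: two such segments with disjoint endpoint sets do not meet. -/
theorem stmt_1 (S : Finset (EuclideanSpace ℝ (Fin 2)))
    (hS : ∀ p ∈ S, ∀ q ∈ S, p ≠ q → Real.sqrt 2 < dist p q) :
    ∀ p1 ∈ S, ∀ p2 ∈ S, ∀ q1 ∈ S, ∀ q2 ∈ S,
      p1 ≠ p2 → q1 ≠ q2 → dist p1 p2 ≤ 2 → dist q1 q2 ≤ 2 →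
      ({p1, p2} : Set (EuclideanSpace ℝ (Fin 2))) ∩ {q1, q2} = ∅ →
      segment ℝ p1 p2 ∩ segment ℝ q1 q2 = ∅ := by
  intro p1 hp1 p2 hp2 q1 hq1 q2 hq2 _ _ hdp hdq hdisj
  refine Set.eq_empty_of_forall_notMem fun x hx => ?_
  obtain ⟨p, hp, q, hq, hpq⟩ := exists_dist_sq_le_of_mem_segment_inter hx
  have hpS : p ∈ S := by rcases hp with rfl | rfl <;> assumption
  have hqS : q ∈ S := by rcases hq with rfl | rfl <;> assumption
  have hne : p ≠ q := by
    rintro rfl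
    exact Set.eq_empty_iff_forall_notMem.1 hdisj p ⟨hp, hq⟩
  have hsep : 2 < dist p q ^ 2 := (Real.sqrt_lt' (dist_pos.2 hne)).1 (hS p hpS q hqS hne)
  have hp4 : dist p1 p2 ^ 2 ≤ 2 ^ 2 := pow_le_pow_left₀ dist_nonneg hdp 2
  have hq4 : dist q1 q2 ^ 2 ≤ 2 ^ 2 := pow_le_pow_left₀ dist_nonneg hdq 2
  linarith
end

section
/- Let k ≥ 3 be an integer and consider the square cell C = [0, 2k] × [0, 2k] and its contraction C⁻ = [2, 2k−2] × [2, 2k−2]. If (i,j) is chosen uniformly at random from {0,…,k−1}², and a fixed point p ∈ ℝ² is given, then the probability that p lies in the contraction of the cell of the grid (of cell side 2k, rooted at (2i,2j)) containing p equals ((k−2)/k)². -/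
lemma count_one (k : ℕ) (hk : 3 ≤ k) (x : ℝ) :
    Nat.card {i : Fin k // ∃ a : ℤ, 2 * (i : ℝ) + 2 * (k : ℝ) * a + 2 ≤ x ∧
      x < 2 * (i : ℝ) + 2 * (k : ℝ) * a + (2 * (k : ℝ) - 2)} = k - 2 := by
  have hk0 : (0 : ℤ) < (k : ℤ) := by exact_mod_cast Nat.lt_of_lt_of_le (by norm_num) hk
  set L : ℤ := ⌊x / 2⌋ - ((k : ℤ) - 1) with hL
  set U : ℤ := ⌊x / 2⌋ - 1 with hU
  have hmem : ∀ n : ℤ, n ∈ Finset.Ioc L U ↔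
      (2 * (n : ℝ) + 2 ≤ x ∧ x < 2 * (n : ℝ) + (2 * (k : ℝ) - 2)) := by
    intro n
    rw [Finset.mem_Ioc]
    constructor
    · rintro ⟨h1, h2⟩
      have hu : ((n : ℤ) + 1 : ℤ) ≤ ⌊x / 2⌋ := by omega
      have hu' : ((n : ℝ) + 1) ≤ x / 2 := by exact_mod_cast Int.le_floor.mp hu
      have hl : ⌊x / 2⌋ < n + ((k : ℤ) - 1) := by omega
      have hl' : x / 2 < (n : ℝ) + ((k : ℝ) - 1) := by
        have := Int.floor_lt.mp hl
        push_cast at this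
        linarith
      constructor <;> linarith
    · rintro ⟨h1, h2⟩
      have hu : ((n : ℤ) + 1 : ℤ) ≤ ⌊x / 2⌋ := by
        apply Int.le_floor.mpr
        push_cast
        linarith
      have hl : ⌊x / 2⌋ < n + ((k : ℤ) - 1) := by
        apply Int.floor_lt.mpr
        push_cast
        linarith
      omega
  let f : {n : ℤ // n ∈ Finset.Ioc L U} → {i : Fin k // ∃ a : ℤ,
      2 * (i : ℝ) + 2 * (k : ℝ) * a + 2 ≤ x ∧
      x < 2 * (i : ℝ) + 2 * (k : ℝ) * a + (2 * (k : ℝ) - 2)} := fun n =>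
    ⟨⟨(n.1 % (k : ℤ)).toNat, by
        have h0 := Int.emod_nonneg n.1 (by omega : (k : ℤ) ≠ 0)
        have h1 := Int.emod_lt_of_pos n.1 hk0
        omega⟩, n.1 / (k : ℤ), by
      obtain ⟨h1, h2⟩ := (hmem n.1).mp n.2
      have h0 := Int.emod_nonneg n.1 (by omega : (k : ℤ) ≠ 0)
      have hdm : (k : ℤ) * (n.1 / (k : ℤ)) + n.1 % (k : ℤ) = n.1 := Int.mul_ediv_add_emod n.1 k
      have hdm' : (k : ℝ) * ((n.1 / (k : ℤ) : ℤ) : ℝ) + ((n.1 % (k : ℤ)).toNat : ℝ) = (n.1 : ℝ) := by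
        have h0' : (((n.1 : ℤ) % (k : ℤ)).toNat : ℤ) = (n.1 : ℤ) % (k : ℤ) :=
          Int.toNat_of_nonneg h0
        rw [← h0'] at hdm
        exact_mod_cast hdm
      constructor
      · simp only [Fin.val_mk]
        linarith
      · simp only [Fin.val_mk]
        linarith⟩
  have hbij : Function.Bijective f := by
    constructor
    · rintro ⟨n, hn⟩ ⟨m, hm⟩ h
      have hv : (n % (k : ℤ)).toNat = (m % (k : ℤ)).toNat := congrArg (fun s => (s.1 : Fin k).val) h
      rw [Finset.mem_Ioc] at hn hm
      have h0n := Int.emod_nonneg n (by omega : (k : ℤ) ≠ 0)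
      have h0m := Int.emod_nonneg m (by omega : (k : ℤ) ≠ 0)
      have hmod : n % (k : ℤ) = m % (k : ℤ) := by omega
      have hdvd : (k : ℤ) ∣ n - m := by
        apply Int.dvd_of_emod_eq_zero
        rw [Int.sub_emod, hmod]
        simp
      obtain ⟨c, hc⟩ := hdvd
      have hc0 : c = 0 := by
        rcases lt_trichotomy c 0 with hlt | heq | hgt
        · exfalso
          have : (k : ℤ) * c ≤ -(k : ℤ) := by nlinarith
          omega
        · exact heq
        · exfalso
          have : (k : ℤ) ≤ (k : ℤ) * c := by nlinarith
          omega
      rw [hc0, mul_zero] at hc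
      apply Subtype.ext
      show n = m
      omega
    · rintro ⟨i, a, h1, h2⟩
      have hik : (i : ℤ) < (k : ℤ) := by exact_mod_cast i.isLt
      have hn : ((i : ℤ) + (k : ℤ) * a) ∈ Finset.Ioc L U := by
        apply (hmem _).mpr
        constructor
        · push_cast
          linarith
        · push_cast
          linarith
      refine ⟨⟨(i : ℤ) + (k : ℤ) * a, hn⟩, ?_⟩
      apply Subtype.ext
      apply Fin.ext
      show (((i : ℤ) + (k : ℤ) * a) % (k : ℤ)).toNat = (i : ℕ)
      have h0 : (0 : ℤ) ≤ (i : ℤ) := by positivity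
      have he : ((i : ℤ) + (k : ℤ) * a) % (k : ℤ) = (i : ℤ) % (k : ℤ) :=
        Int.add_mul_emod_self_left ..
      have he2 : (i : ℤ) % (k : ℤ) = (i : ℤ) := Int.emod_eq_of_lt h0 hik
      omega
  calc Nat.card {i : Fin k // ∃ a : ℤ, 2 * (i : ℝ) + 2 * (k : ℝ) * a + 2 ≤ x ∧
        x < 2 * (i : ℝ) + 2 * (k : ℝ) * a + (2 * (k : ℝ) - 2)}
      = Nat.card {n : ℤ // n ∈ Finset.Ioc L U} := (Nat.card_eq_of_bijective f hbij).symm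
    _ = (Finset.Ioc L U).card := Nat.card_eq_finsetCard _
    _ = (U - L).toNat := Int.card_Ioc L U
    _ = k - 2 := by omega

/-- For a grid of cells of side `2k` rooted at `(2i,2j)`, with the contraction of a cell
obtained by removing the margin of width `2` along the boundary, the number of shifts
`(i,j) ∈ {0,…,k-1}²` for which a fixed point `p` lies in a contracted cell is exactly
`(k-2)²`; equivalently the probability under a uniform random shift is `((k-2)/k)²`. -/
theorem stmt_9 (k : ℕ) (hk : 3 ≤ k) (p : ℝ × ℝ) :
    Nat.card {ij : Fin k × Fin k //
      (∃ a : ℤ, 2 * (ij.1 : ℝ) + 2 * k * a + 2 ≤ p.1 ∧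
        p.1 < 2 * (ij.1 : ℝ) + 2 * k * a + (2 * k - 2)) ∧
      (∃ b : ℤ, 2 * (ij.2 : ℝ) + 2 * k * b + 2 ≤ p.2 ∧
        p.2 < 2 * (ij.2 : ℝ) + 2 * k * b + (2 * k - 2))} = (k - 2) ^ 2 := by
  rw [Nat.card_congr (Equiv.subtypeProdEquivProd
      (p := fun i : Fin k => ∃ a : ℤ, 2 * (i : ℝ) + 2 * (k : ℝ) * a + 2 ≤ p.1 ∧
        p.1 < 2 * (i : ℝ) + 2 * (k : ℝ) * a + (2 * (k : ℝ) - 2))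
      (q := fun j : Fin k => ∃ b : ℤ, 2 * (j : ℝ) + 2 * (k : ℝ) * b + 2 ≤ p.2 ∧
        p.2 < 2 * (j : ℝ) + 2 * (k : ℝ) * b + (2 * (k : ℝ) - 2))),
    Nat.card_prod, count_one k hk p.1, count_one k hk p.2, sq]
end

section
/- Let R_q and R_s be axis-aligned rectangles in the plane, each of width and height at least 1, whose interiors intersect, and such that R_q contains two corners of R_s (i.e., one full side of R_s crosses into R_q). Let ℓ be the axis-aligned line through the center of R_s perpendicular to the shared overlap direction, bisecting R_s. Then any axis-aligned rectangle R' of width and height at least 1 that intersects the segment of ℓ from the center of R_s to the center of R_q ∩ R_s must have overlap at least 1/3 with R_q or with R_s, provided overlap(R_q, R_s) < 1/3. -/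
/-- A closed axis-aligned rectangle `[x₁,x₂] × [y₁,y₂]`. -/
structure Rect where
  x1 : ℝ
  x2 : ℝ
  y1 : ℝ
  y2 : ℝ

/-- The set of points of a rectangle. -/
def Rect.toSet (R : Rect) : Set (ℝ × ℝ) :=
  {p | R.x1 ≤ p.1 ∧ p.1 ≤ R.x2 ∧ R.y1 ≤ p.2 ∧ p.2 ≤ R.y2}

/-- The overlap of two rectangles: the minimum translation distance along an axis
making their interiors disjoint (the minimum of the horizontal and vertical
extents of their intersection). -/
noncomputable def Rect.overlap (A B : Rect) : ℝ :=
  min (min A.x2 B.x2 - max A.x1 B.x1) (min A.y2 B.y2 - max A.y1 B.y1)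

/-- If `Rq` contains two corners of `Rs` (here: the top side of `Rs` lies in `Rq`),
`overlap Rq Rs < 1/3`, and all rectangles have width and height at least `1`, then
any rectangle `R'` meeting the vertical segment joining the center of `Rs` to the
center of `Rq ∩ Rs` overlaps `Rq` or `Rs` by at least `1/3`. -/
theorem stmt_12 (Rq Rs R' : Rect)
    (hq : Rq.x2 - Rq.x1 ≥ 1 ∧ Rq.y2 - Rq.y1 ≥ 1)
    (hs : Rs.x2 - Rs.x1 ≥ 1 ∧ Rs.y2 - Rs.y1 ≥ 1)
    (h' : R'.x2 - R'.x1 ≥ 1 ∧ R'.y2 - R'.y1 ≥ 1)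
    -- `Rq` contains the two top corners of `Rs` and their interiors intersect:
    (hcorners : Rq.x1 ≤ Rs.x1 ∧ Rs.x2 ≤ Rq.x2 ∧
      Rs.y1 ≤ Rq.y1 ∧ Rq.y1 ≤ Rs.y2 ∧ Rs.y2 ≤ Rq.y2 ∧ Rq.y1 < Rs.y2)
    (hoverlap : Rq.overlap Rs < 1 / 3)
    -- `R'` meets the segment of the vertical bisector `ℓ` of `Rs` from the center of `Rs`
    -- to the center of `Rq ∩ Rs`:
    (hmeets : ∃ y : ℝ,
      min ((Rs.y1 + Rs.y2) / 2) ((Rq.y1 + Rs.y2) / 2) ≤ y ∧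
      y ≤ max ((Rs.y1 + Rs.y2) / 2) ((Rq.y1 + Rs.y2) / 2) ∧
      ((Rs.x1 + Rs.x2) / 2, y) ∈ R'.toSet) :
    1 / 3 ≤ R'.overlap Rq ∨ 1 / 3 ≤ R'.overlap Rs := by
  obtain ⟨hqw, hqh⟩ := hq
  obtain ⟨hsw, hsh⟩ := hs
  obtain ⟨hw', hh'⟩ := h'
  obtain ⟨hx1, hx2, hy1s, hy1q, hy2s, hlt⟩ := hcorners
  obtain ⟨y, hymin, hymax, hmem⟩ := hmeets
  simp only [Rect.toSet, Set.mem_setOf_eq] at hmem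
  obtain ⟨ha1, ha2, hb1, hb2⟩ := hmem
  have hAB : (Rs.y1 + Rs.y2) / 2 ≤ (Rq.y1 + Rs.y2) / 2 := by linarith
  rw [min_eq_left hAB] at hymin
  rw [max_eq_right hAB] at hymax
  -- key: Rs.y2 - Rq.y1 < 1/3
  have hkey : Rs.y2 - Rq.y1 < 1 / 3 := by
    unfold Rect.overlap at hoverlap
    rw [min_eq_right hx2, max_eq_right hx1, min_eq_right hy2s,
      max_eq_left hy1s] at hoverlap
    rcases min_lt_iff.mp hoverlap with h | h
    · linarith
    · exact h
  set c := (Rs.x1 + Rs.x2) / 2 with hc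
  -- horizontal extent with Rs is ≥ 1/3
  have hhs : (1 : ℝ) / 3 ≤ min R'.x2 Rs.x2 - max R'.x1 Rs.x1 := by
    rcases le_total (c + 1 / 2) R'.x2 with h | h
    · have h1 : c + 1 / 2 ≤ min R'.x2 Rs.x2 := le_min h (by simp [hc]; linarith)
      have h2 : max R'.x1 Rs.x1 ≤ c := max_le ha1 (by simp [hc]; linarith)
      linarith
    · have h1 : c ≤ min R'.x2 Rs.x2 := le_min ha2 (by simp [hc]; linarith)
      have h2 : max R'.x1 Rs.x1 ≤ c - 1 / 2 :=
        max_le (by linarith) (by simp [hc]; linarith)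
      linarith
  -- horizontal extent with Rq is ≥ 1/3
  have hhq : (1 : ℝ) / 3 ≤ min R'.x2 Rq.x2 - max R'.x1 Rq.x1 := by
    rcases le_total (c + 1 / 2) R'.x2 with h | h
    · have h1 : c + 1 / 2 ≤ min R'.x2 Rq.x2 := le_min h (by simp [hc]; linarith)
      have h2 : max R'.x1 Rq.x1 ≤ c := max_le ha1 (by simp [hc]; linarith)
      linarith
    · have h1 : c ≤ min R'.x2 Rq.x2 := le_min ha2 (by simp [hc]; linarith)
      have h2 : max R'.x1 Rq.x1 ≤ c - 1 / 2 :=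
        max_le (by linarith) (by simp [hc]; linarith)
      linarith
  have hys2 : y ≤ Rs.y2 := by linarith
  have hys1 : Rs.y1 ≤ y - 1 / 2 := by linarith
  rcases le_total R'.y1 (y - 1 / 2) with hA | hB
  · -- vertical extent with Rs ≥ 1/2
    right
    refine le_min hhs ?_
    have h1 : y ≤ min R'.y2 Rs.y2 := le_min hb2 hys2
    have h2 : max R'.y1 Rs.y1 ≤ y - 1 / 2 := max_le hA hys1
    linarith
  · -- R'.y2 ≥ R'.y1 + 1
    rcases le_total (1 / 3 : ℝ) (Rs.y2 - R'.y1) with hB1 | hB2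
    · right
      refine le_min hhs ?_
      have h1 : R'.y1 + 1 / 3 ≤ min R'.y2 Rs.y2 :=
        le_min (by linarith) (by linarith)
      have h2 : max R'.y1 Rs.y1 ≤ R'.y1 := max_le le_rfl (by linarith)
      linarith
    · left
      refine le_min hhq ?_
      have h1 : Rs.y2 + 2 / 3 ≤ min R'.y2 Rq.y2 :=
        le_min (by linarith) (by linarith)
      have h2 : max R'.y1 Rq.y1 ≤ Rs.y2 := max_le (by linarith) (by linarith)
      linarith
end

section
/- Let k ≥ 1 be an integer, and fix a point p ∈ ℝ². For (i,j) ∈ {0,…,k−1}², consider the grid with square cells of side 2k rooted at (2i,2j), and define the expansion C⁺ of a cell C as the set of points within L∞ distance at most 2 of C. Then the number of pairs (i,j) such that p belongs to the expansion of at least one cell, counted with multiplicity (i.e., Σ_{(i,j)} #{cells C of grid (i,j) : p ∈ C⁺}) equals (k+2)². -/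
lemma key_count (k : ℕ) (hk : 1 ≤ k) (x : ℝ) :
    Nat.card {c : Fin k × ℤ //
      2 * (c.1 : ℝ) + 2 * k * c.2 - 2 ≤ x ∧
        x < 2 * (c.1 : ℝ) + 2 * k * c.2 + 2 * k + 2} = k + 2 := by
  have hk0 : (0 : ℤ) < k := by exact_mod_cast hk
  set A : ℤ := ⌊x / 2⌋ - k - 1 with hA
  set B : ℤ := ⌊x / 2⌋ + 1 with hB
  have hcond : ∀ n : ℤ,
      ((2 * (n : ℝ) - 2 ≤ x ∧ x < 2 * n + 2 * k + 2) ↔ (A < n ∧ n ≤ B)) := by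
    intro n
    have h1 : 2 * (n : ℝ) - 2 ≤ x ↔ n ≤ B := by
      have h1' : 2 * (n : ℝ) - 2 ≤ x ↔ n - 1 ≤ ⌊x / 2⌋ := by
        rw [Int.le_floor]
        constructor <;> intro h <;> push_cast at h ⊢ <;> linarith
      rw [h1']; omega
    have h2 : x < 2 * (n : ℝ) + 2 * k + 2 ↔ A < n := by
      rw [hA, sub_lt_iff_lt_add, sub_lt_iff_lt_add, Int.floor_lt]
      constructor <;> intro h <;> push_cast at h ⊢ <;> linarith
    tauto
  have hcard : Nat.card ↥(Finset.Ioc A B) = k + 2 := by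
    rw [Nat.card_eq_finsetCard, Int.card_Ioc]
    simp [hA, hB]
    omega
  rw [← hcard]
  apply Nat.card_eq_of_bijective
    (f := fun c => (⟨(c.1.1 : ℤ) + k * c.1.2, by
      rcases c with ⟨⟨i, a⟩, h1, h2⟩
      have := (hcond ((i : ℤ) + k * a)).1 (by constructor <;> push_cast <;>
        [linarith [h1]; linarith [h2]])
      simpa [Finset.mem_Ioc] using this⟩ : ↥(Finset.Ioc A B)))
  constructor
  · rintro ⟨⟨i, a⟩, hia⟩ ⟨⟨j, b⟩, hjb⟩ h
    simp only [Subtype.mk.injEq, Prod.mk.injEq] at h ⊢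
    have hi : (0:ℤ) ≤ (i:ℤ) ∧ (i:ℤ) < k := ⟨Int.ofNat_nonneg _, by exact_mod_cast i.2⟩
    have hj : (0:ℤ) ≤ (j:ℤ) ∧ (j:ℤ) < k := ⟨Int.ofNat_nonneg _, by exact_mod_cast j.2⟩
    have hij : (i:ℤ) = (j:ℤ) := by
      have h1 : ((i:ℤ) + k * a) % k = (i:ℤ) := by
        rw [Int.add_mul_emod_self_left, Int.emod_eq_of_lt hi.1 hi.2]
      have h2 : ((j:ℤ) + k * b) % k = (j:ℤ) := by
        rw [Int.add_mul_emod_self_left, Int.emod_eq_of_lt hj.1 hj.2]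
      rw [← h1, ← h2, h]
    have hab : a = b := by
      have : (k:ℤ) * a = k * b := by omega
      exact mul_left_cancel₀ (by omega) this
    exact ⟨Fin.ext (by exact_mod_cast hij), hab⟩
  · rintro ⟨n, hn⟩
    rw [Finset.mem_Ioc] at hn
    have h1 : 0 ≤ n % k := Int.emod_nonneg n (by omega)
    have h2 : n % k < k := Int.emod_lt_of_pos n hk0
    have heq : ((n % k : ℤ)) + k * (n / k) = n := Int.emod_add_mul_ediv n k
    have hlt : (n % k).toNat < k := by omega
    have hcast : (((⟨(n % k).toNat, hlt⟩ : Fin k) : ℤ)) = n % k := by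
      simp [Int.toNat_of_nonneg h1]
    have hintR : ((n % k : ℤ) : ℝ) + (k : ℝ) * ((n / k : ℤ) : ℝ) = (n : ℝ) := by
      exact_mod_cast congrArg (fun z : ℤ => (z : ℝ)) heq
    have hfinR : (((⟨(n % k).toNat, hlt⟩ : Fin k) : ℕ) : ℝ) = ((n % k : ℤ) : ℝ) := by
      simp only [Fin.val_mk]
      exact_mod_cast congrArg (fun z : ℤ => (z : ℝ)) (Int.toNat_of_nonneg h1)
    have hc : (2 * (((⟨(n % k).toNat, hlt⟩ : Fin k) : ℕ) : ℝ) + 2 * (k : ℝ) * ((n / k : ℤ) : ℝ))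
        = 2 * (n : ℝ) := by
      rw [hfinR]; linarith
    have hP := (hcond n).2 hn
    refine ⟨⟨(⟨(n % k).toNat, hlt⟩, n / k), ?_, ?_⟩, ?_⟩
    · dsimp only; rw [hc]; exact hP.1
    · dsimp only; rw [hc]; exact hP.2
    · ext
      dsimp only
      rw [hcast]; exact heq

/-- For grids of cells of side `2k` rooted at `(2i,2j)`, `(i,j) ∈ {0,…,k-1}²`, where the
expansion of a cell consists of points within `L∞` distance at most `2` of it, the total
number, over all shifts, of expanded cells containing a fixed point `p` is `(k+2)²`. -/
theorem stmt_17 (k : ℕ) (hk : 1 ≤ k) (p : ℝ × ℝ) :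
    Nat.card {c : (Fin k × ℤ) × (Fin k × ℤ) //
      (2 * (c.1.1 : ℝ) + 2 * k * c.1.2 - 2 ≤ p.1 ∧
        p.1 < 2 * (c.1.1 : ℝ) + 2 * k * c.1.2 + 2 * k + 2) ∧
      (2 * (c.2.1 : ℝ) + 2 * k * c.2.2 - 2 ≤ p.2 ∧
        p.2 < 2 * (c.2.1 : ℝ) + 2 * k * c.2.2 + 2 * k + 2)} = (k + 2) ^ 2 := by
  rw [Nat.card_congr (Equiv.subtypeProdEquivProd (p := fun c : Fin k × ℤ =>
        2 * (c.1 : ℝ) + 2 * k * c.2 - 2 ≤ p.1 ∧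
          p.1 < 2 * (c.1 : ℝ) + 2 * k * c.2 + 2 * k + 2)
      (q := fun c : Fin k × ℤ =>
        2 * (c.1 : ℝ) + 2 * k * c.2 - 2 ≤ p.2 ∧
          p.2 < 2 * (c.1 : ℝ) + 2 * k * c.2 + 2 * k + 2)),
    Nat.card_prod, key_count k hk p.1, key_count k hk p.2, sq]
end
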